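/- arXiv:2212.14476 — 2 statements merged into one kernel-verified Lean document; each statement's English description precedes it below -/
import Mathlib

section
/- High-temperature expansion of the partition function: for every N ∈ ℕ, every β ∈ ℝ and every symmetric array of real numbers (g_{ij})_{1≤i,j≤N} with g_{ii} = 0, one has the identity 2^{-N} Σ_{σ∈{-1,1}^N} exp( β Σ_{1≤i<j≤N} g_{ij} σ_i σ_j ) = ( ∏_{1≤u<v≤N} cosh(β g_{uv}) ) · Σ_{γ∈Γ_sc} ∏_{{u,v}∈E_γ} tanh(β g_{uv}), where the sum is over all simple closed graphs on [N] (the empty graph contributing 1). -/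
open MeasureTheory ProbabilityTheory Filter Topology
open scoped NNReal ENNReal

namespace SK

/-- Edges are ordered pairs `(u, v)` with `u < v`. -/
abbrev Edge (N : ℕ) := Fin N × Fin N

variable {N : ℕ}

/-- An edge set determines a simple graph if every edge is an increasing pair. -/
def IsGraph (E : Finset (Edge N)) : Prop := ∀ e ∈ E, e.1 < e.2

/-- Degree of a vertex: the number of edges containing it. -/
def degree (E : Finset (Edge N)) (v : Fin N) : ℕ :=
  (E.filter fun e => e.1 = v ∨ e.2 = v).card

/-- Vertex set of a graph given by an edge set (no isolated vertices). -/
def verts (E : Finset (Edge N)) : Finset (Fin N) :=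
  Finset.univ.filter fun v => 0 < degree E v

/-- The simple graph associated to an edge set. -/
def toSG (E : Finset (Edge N)) : SimpleGraph (Fin N) where
  Adj u v := u ≠ v ∧ ((u, v) ∈ E ∨ (v, u) ∈ E)
  symm := ⟨fun _ _ h => ⟨h.1.symm, h.2.symm⟩⟩
  loopless := ⟨fun _ h => h.1 rfl⟩

/-- Connectivity of the graph induced on its vertex set. -/
def GConnected (E : Finset (Edge N)) : Prop :=
  ∀ u ∈ verts E, ∀ v ∈ verts E, (toSG E).Reachable u v

/-- Simple closed graph: every vertex has even degree (member of `Γ_sc`;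
the empty graph is allowed). -/
def IsClosed (E : Finset (Edge N)) : Prop :=
  IsGraph E ∧ ∀ v, Even (degree E v)

/-- Cycle (simple loop, member of `Γ_loop`): connected with all degrees equal to two. -/
def IsCycle (E : Finset (Edge N)) : Prop :=
  IsGraph E ∧ E.Nonempty ∧ GConnected E ∧ ∀ v ∈ verts E, degree E v = 2

/-- Self-avoiding path from `i` to `j` (member of `Γ_p^{ij}`): connected, exactly the two
vertices `i ≠ j` have degree one, and all other vertices have degree two. -/
def IsPath (i j : Fin N) (E : Finset (Edge N)) : Prop :=
  IsGraph E ∧ i ≠ j ∧ GConnected E ∧ i ∈ verts E ∧ j ∈ verts E ∧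
    degree E i = 1 ∧ degree E j = 1 ∧ ∀ v ∈ verts E, v ≠ i → v ≠ j → degree E v = 2

/-- The edge `{i, j}` as an ordered pair. -/
def mkEdge (i j : Fin N) : Edge N := if i < j then (i, j) else (j, i)

/-- Weight of a graph: `w(γ) = ∏_{e ∈ γ} tanh(β g_e)`, with `w(∅) = 1`. -/
noncomputable def wt (β : ℝ) (g : Fin N → Fin N → ℝ) (E : Finset (Edge N)) : ℝ :=
  ∏ e ∈ E, Real.tanh (β * g e.1 e.2)

/-- Polynomial weight of a graph: `∏_{e ∈ γ} β g_e`. -/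
noncomputable def pwt (β : ℝ) (g : Fin N → Fin N → ℝ) (E : Finset (Edge N)) : ℝ :=
  ∏ e ∈ E, β * g e.1 e.2

/-- Spin value of a Boolean configuration entry. -/
def spin (b : Bool) : ℝ := if b then 1 else -1

/-- The set of increasing pairs `i < j`. -/
def pairs (N : ℕ) : Finset (Edge N) := Finset.univ.filter fun e => e.1 < e.2

/-- SK Hamiltonian `H_N(σ) = β ∑_{i<j} g_{ij} σ_i σ_j`. -/
noncomputable def hamil (β : ℝ) (g : Fin N → Fin N → ℝ) (σ : Fin N → ℝ) : ℝ :=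
  β * ∑ e ∈ pairs N, g e.1 e.2 * σ e.1 * σ e.2

/-- Gibbs expectation `⟨f⟩`. -/
noncomputable def gibbs (β : ℝ) (g : Fin N → Fin N → ℝ) (f : (Fin N → ℝ) → ℝ) : ℝ :=
  (∑ s : Fin N → Bool, f (fun i => spin (s i)) * Real.exp (hamil β g fun i => spin (s i))) /
    ∑ s : Fin N → Bool, Real.exp (hamil β g fun i => spin (s i))

/-- Two point correlation matrix `M = (⟨σ_i σ_j⟩)`. -/
noncomputable def Mmat (β : ℝ) (g : Fin N → Fin N → ℝ) : Matrix (Fin N) (Fin N) ℝ :=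
  Matrix.of fun i j => gibbs β g fun σ => σ i * σ j

/-- Self-avoiding path matrix `P`: `p_{ii} = 1` and
`p_{ij} = ∑_{γ ∈ Γ_p^{ij}} ∏_{e ∈ γ} β g_e` for `i ≠ j`. -/
noncomputable def Pmat (β : ℝ) (g : Fin N → Fin N → ℝ) : Matrix (Fin N) (Fin N) ℝ :=
  Matrix.of fun i j =>
    if i = j then 1 else ∑ᶠ E ∈ {E : Finset (Edge N) | IsPath i j E}, pwt β g E

/-- Frobenius (Hilbert–Schmidt) norm of a matrix. -/
noncomputable def frobNorm (A : Matrix (Fin N) (Fin N) ℝ) : ℝ :=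
  Real.sqrt (∑ i, ∑ j, A i j ^ 2)

/-- Euclidean operator norm of a matrix: `sup_{‖v‖ = 1} ‖A v‖`. -/
noncomputable def opNorm (A : Matrix (Fin N) (Fin N) ℝ) : ℝ :=
  sSup {r : ℝ | ∃ v : Fin N → ℝ, ∑ i, v i ^ 2 = 1 ∧ r = Real.sqrt (∑ i, A.mulVec v i ^ 2)}

/-- The resolvent `((1 + β²)·id - βG)⁻¹`. -/
noncomputable def resolvent (β : ℝ) (G : Matrix (Fin N) (Fin N) ℝ) : Matrix (Fin N) (Fin N) ℝ :=
  ((1 + β ^ 2) • (1 : Matrix (Fin N) (Fin N) ℝ) - β • G)⁻¹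

/-- Large graph threshold `k_N = (log N)^{3/2}`. -/
noncomputable def kN (N : ℕ) : ℝ := Real.log N ^ (3 / 2 : ℝ)

/-- `E` is an edge-disjoint union of self-avoiding paths with endpoints in `W`. -/
def IsPathUnion (W : Finset (Fin N)) (E : Finset (Edge N)) : Prop :=
  ∃ (k : ℕ) (p : Fin k → Finset (Edge N)) (a b : Fin k → Fin N),
    (∀ t, IsPath (a t) (b t) (p t)) ∧ (∀ t, a t ∈ W ∧ b t ∈ W) ∧
    (∀ s t, s ≠ t → Disjoint (p s) (p t)) ∧ E = Finset.univ.biUnion p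

/-- Relabeling of a graph by a permutation of the vertices. -/
def relabel (π : Equiv.Perm (Fin N)) (E : Finset (Edge N)) : Finset (Edge N) :=
  E.image fun e => mkEdge (π e.1) (π e.2)

/-- Two graphs on the same vertex set are isomorphic if one is a relabeling of the other. -/
def Isomorphic (E E' : Finset (Edge N)) : Prop :=
  ∃ π : Equiv.Perm (Fin N), relabel π E = E'

/-- The set `T_{η₁}^{ij}` of multiplicity-two graphs `ψ₂(γ∘τ) = γ ∩ τ` arising from pairs
`(γ, τ) ∈ S_{η₁}^{ij}`, i.e. `γ ∈ Γ_loop`, `τ ∈ Γ_sc`, `{i,j} ∈ γ`, `|V_γ ∩ V_τ| ≥ 2`,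
`|γ| < c` and `ψ₁(γ∘τ) = η₁`. -/
def Tset (N : ℕ) (c : ℝ) (i j : Fin N) (η₁ : Finset (Edge N)) : Set (Finset (Edge N)) :=
  {η₂ | ∃ γ τ : Finset (Edge N), IsCycle γ ∧ IsClosed τ ∧ mkEdge i j ∈ γ ∧
    2 ≤ (verts γ ∩ verts τ).card ∧ (γ.card : ℝ) < c ∧
    (γ ∪ τ) \ (γ ∩ τ) = η₁ ∧ γ ∩ τ = η₂}

/-- The coupling hypotheses of the SK model: `(g_{ij})_{i<j}` are independent centered
Gaussian random variables of variance `1/N`, extended symmetrically with `g_{ii} = 0`. -/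
def IsSKCoupling (N : ℕ) {Ω : Type} [MeasureSpace Ω] (g : Ω → Fin N → Fin N → ℝ) : Prop :=
  IsProbabilityMeasure (ℙ : Measure Ω) ∧
    (∀ i j, Measurable fun ω => g ω i j) ∧
    (∀ ω i j, g ω j i = g ω i j) ∧
    (∀ ω i, g ω i i = 0) ∧
    (∀ i j : Fin N, i < j →
      Measure.map (fun ω => g ω i j) ℙ = gaussianReal 0 (N : ℝ≥0)⁻¹) ∧
    iIndepFun
      (fun (e : {e : Edge N // e.1 < e.2}) ω => g ω e.1.1 e.1.2) ℙ

/-!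
Write `exp (t σ_u σ_v) = cosh t · (1 + σ_u σ_v tanh t)` for each pair `u < v` and expand the
product over pairs into a sum over edge sets `E`: the monomial attached to `E` is
`∏_v σ_v ^ deg_E v`. Summing over the `2^N` spin configurations factorizes over the
vertices, and `∑_{σ_v = ±1} σ_v ^ d` is `2` for even `d` and `0` for odd `d`, so exactly
the closed graphs survive.
-/

lemma exp_mul_eq_cosh_mul {ε : ℝ} (hε : ε = 1 ∨ ε = -1) (t : ℝ) :
    Real.exp (t * ε) = Real.cosh t * (ε * Real.tanh t + 1) := by
  have hcosh : Real.cosh t ≠ 0 := (Real.cosh_pos t).ne'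
  rw [Real.tanh_eq_sinh_div_cosh]
  rcases hε with rfl | rfl
  · field_simp
    rw [← Real.cosh_add_sinh, add_comm]
  · field_simp
    rw [← Real.cosh_sub_sinh]
    ring

lemma spin_eq_one_or_eq_neg_one (b : Bool) : spin b = 1 ∨ spin b = -1 := by
  cases b <;> simp [spin]

lemma sum_spin_pow (d : ℕ) : ∑ b : Bool, spin b ^ d = if Even d then 2 else 0 := by
  split_ifs with hd
  · simp [spin, hd.neg_one_pow, one_add_one_eq_two]
  · simp [spin, (Nat.not_even_iff_odd.mp hd).neg_one_pow]

lemma sum_prod_spin_pow {ι : Type*} [Fintype ι] [DecidableEq ι] (d : ι → ℕ) :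
    ∑ s : ι → Bool, ∏ v, spin (s v) ^ d v =
      if ∀ v, Even (d v) then 2 ^ Fintype.card ι else 0 := by
  rw [← Fintype.prod_sum fun v b => spin b ^ d v]
  simp only [sum_spin_pow]
  split_ifs with hd
  · simp [hd]
  · push Not at hd
    obtain ⟨v, hv⟩ := hd
    exact Finset.prod_eq_zero (Finset.mem_univ v) (if_neg hv)

lemma degree_eq_sum (E : Finset (Edge N)) (v : Fin N) :
    degree E v = ∑ e ∈ E, if e.1 = v ∨ e.2 = v then 1 else 0 := by
  rw [degree, Finset.card_filter]

lemma prod_pow_ite_endpoint {M : Type*} [CommMonoid M] (σ : Fin N → M) {e : Edge N}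
    (he : e.1 ≠ e.2) :
    ∏ v, σ v ^ (if e.1 = v ∨ e.2 = v then 1 else 0) = σ e.1 * σ e.2 := by
  have hsplit : ∀ v, (if e.1 = v ∨ e.2 = v then 1 else 0) =
      (if e.1 = v then 1 else 0) + (if e.2 = v then 1 else 0) := by
    intro v
    by_cases h1 : e.1 = v <;> by_cases h2 : e.2 = v <;> simp_all
  simp only [hsplit, pow_add, Finset.prod_mul_distrib, Finset.prod_pow_boole, Finset.mem_univ,
    if_true]

lemma prod_mul_eq_prod_pow_degree {M : Type*} [CommMonoid M] (σ : Fin N → M)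
    {E : Finset (Edge N)} (hE : ∀ e ∈ E, e.1 ≠ e.2) :
    ∏ e ∈ E, σ e.1 * σ e.2 = ∏ v, σ v ^ degree E v := by
  simp only [degree_eq_sum, ← Finset.prod_pow_eq_pow_sum]
  rw [Finset.prod_comm]
  exact Finset.prod_congr rfl fun e he => (prod_pow_ite_endpoint σ (hE e he)).symm

lemma ne_of_mem_powerset_pairs {E : Finset (Edge N)} (hE : E ∈ (pairs N).powerset) :
    ∀ e ∈ E, e.1 ≠ e.2 := fun _ he =>
  (Finset.mem_filter.mp (Finset.mem_powerset.mp hE he)).2.ne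

lemma exp_hamil_eq_sum_powerset (β : ℝ) (g : Fin N → Fin N → ℝ) {σ : Fin N → ℝ}
    (hσ : ∀ v, σ v = 1 ∨ σ v = -1) :
    Real.exp (hamil β g σ) = (∏ e ∈ pairs N, Real.cosh (β * g e.1 e.2)) *
      ∑ E ∈ (pairs N).powerset, (∏ v, σ v ^ degree E v) * wt β g E := by
  have hσσ : ∀ e : Edge N, σ e.1 * σ e.2 = 1 ∨ σ e.1 * σ e.2 = -1 := fun e => by
    rcases hσ e.1 with h1 | h1 <;> rcases hσ e.2 with h2 | h2 <;> simp [h1, h2]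
  have hfactor : Real.exp (hamil β g σ) = ∏ e ∈ pairs N, Real.cosh (β * g e.1 e.2) *
      (σ e.1 * σ e.2 * Real.tanh (β * g e.1 e.2) + 1) := by
    rw [hamil, Finset.mul_sum, Real.exp_sum]
    refine Finset.prod_congr rfl fun e _ => ?_
    rw [← exp_mul_eq_cosh_mul (hσσ e)]
    congr 1
    ring
  rw [hfactor, Finset.prod_mul_distrib, Finset.prod_add]
  congr 1
  refine Finset.sum_congr rfl fun E hE => ?_
  rw [Finset.prod_const_one, mul_one, Finset.prod_mul_distrib,
    prod_mul_eq_prod_pow_degree σ (ne_of_mem_powerset_pairs hE), wt]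

lemma setOf_isClosed_eq :
    {E : Finset (Edge N) | IsClosed E} =
      ↑((pairs N).powerset.filter fun E => ∀ v, Even (degree E v)) := by
  ext E
  simp [IsClosed, IsGraph, Finset.subset_iff, pairs]

theorem high_temperature_expansion_general (N : ℕ) (β : ℝ) (g : Fin N → Fin N → ℝ) :
    (∑ s : Fin N → Bool, Real.exp (hamil β g fun i => spin (s i))) / 2 ^ N =
      (∏ e ∈ pairs N, Real.cosh (β * g e.1 e.2)) *
        ∑ᶠ E ∈ {E : Finset (Edge N) | IsClosed E}, wt β g E := by
  have hsum : ∑ s : Fin N → Bool, Real.exp (hamil β g fun i => spin (s i)) =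
      (∏ e ∈ pairs N, Real.cosh (β * g e.1 e.2)) * ∑ E ∈ (pairs N).powerset,
        (∑ s : Fin N → Bool, ∏ v, spin (s v) ^ degree E v) * wt β g E := by
    simp only [exp_hamil_eq_sum_powerset β g fun v => spin_eq_one_or_eq_neg_one _,
      ← Finset.mul_sum, Finset.sum_mul]
    rw [Finset.sum_comm]
  rw [hsum, setOf_isClosed_eq, finsum_mem_coe_finset]
  simp only [sum_prod_spin_pow, Fintype.card_fin, ite_mul, zero_mul, ← Finset.sum_filter,
    ← Finset.mul_sum]
  field_simp

/-- high-temperature expansion of the partition function: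
`2^{-N} ∑_σ exp(β ∑_{i<j} g_{ij} σ_i σ_j)
  = (∏_{u<v} cosh(β g_{uv})) · ∑_{γ ∈ Γ_sc} ∏_{e ∈ γ} tanh(β g_e)`. -/
theorem high_temperature_expansion (N : ℕ) (β : ℝ) (g : Fin N → Fin N → ℝ)
    (hsym : ∀ i j, g j i = g i j) (hdiag : ∀ i, g i i = 0) :
    (∑ s : Fin N → Bool, Real.exp (hamil β g fun i => spin (s i))) / 2 ^ N =
      (∏ e ∈ pairs N, Real.cosh (β * g e.1 e.2)) *
        ∑ᶠ E ∈ {E : Finset (Edge N) | IsClosed E}, wt β g E :=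
  high_temperature_expansion_general N β g

end SK
end

section
/- Injectivity of the gluing map on vertex-almost-disjoint pairs: fix N ∈ ℕ and i₁ ≠ i₂ in [N]. If (γ,τ) and (γ',τ') both belong to S_{i₁i₂} = { (γ,τ) ∈ Γ_loop × Γ_sc : {i₁,i₂} ∈ E_γ, |V_γ ∩ V_τ| ≤ 1 } and the edge-disjoint unions coincide, γ ∘ τ = γ' ∘ τ', then (γ,τ) = (γ',τ'). In other words, Φ(γ,τ) := γ ∘ τ restricted to S_{i₁i₂} is injective. -/
open MeasureTheory ProbabilityTheory Filter Topology
open scoped NNReal ENNReal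

namespace SK

variable {N : ℕ}

/-!
Write `S = γ ∩ γ'`. At a vertex where `S` has odd degree, `γ'` has exactly one edge outside `S`,
hence outside `γ`, hence in `τ`; so the odd-degree vertices of `S` lie in `V_γ ∩ V_τ`. A graph
cannot have exactly one vertex of odd degree, so all degrees of `S` are even. Inside a cycle,
every vertex has degree `2`, so an even subgraph shares no vertex with its complement, and
connectivity forces it to be empty or everything. As `S` contains `{i₁, i₂}`, `S = γ`. By symmetry
`γ = γ'`, and `τ = τ'` because `|V_γ ∩ V_τ| ≤ 1` makes `γ` and `τ` edge-disjoint.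
-/

lemma mem_verts {E : Finset (Edge N)} {v : Fin N} : v ∈ verts E ↔ 0 < degree E v := by
  simp [verts]

lemma mem_verts_iff {E : Finset (Edge N)} {v : Fin N} :
    v ∈ verts E ↔ ∃ e ∈ E, e.1 = v ∨ e.2 = v := by
  simp [verts, degree, Finset.card_pos, Finset.filter_nonempty_iff]

lemma verts_mono {S E : Finset (Edge N)} (h : S ⊆ E) : verts S ⊆ verts E := fun _ hv =>
  let ⟨e, he, hev⟩ := mem_verts_iff.1 hv
  mem_verts_iff.2 ⟨e, h he, hev⟩

lemma degree_add_degree_sdiff {S E : Finset (Edge N)} (h : S ⊆ E) (v : Fin N) :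
    degree S v + degree (E \ S) v = degree E v := by
  unfold degree
  rw [← Finset.card_union_of_disjoint (Finset.disjoint_filter_filter Finset.disjoint_sdiff),
    ← Finset.filter_union, Finset.union_sdiff_of_subset h]

lemma sum_degree_eq_two_mul_card {E : Finset (Edge N)} (hE : IsGraph E) :
    ∑ v, degree E v = 2 * E.card := by
  simp_rw [degree, Finset.card_filter]
  rw [Finset.sum_comm, Finset.card_eq_sum_ones, Finset.mul_sum]
  refine Finset.sum_congr rfl fun e he => ?_
  rw [← Finset.card_filter, mul_one]
  have hends : (Finset.univ.filter fun v : Fin N => e.1 = v ∨ e.2 = v) = {e.1, e.2} := by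
    ext v
    simp [eq_comm]
  rw [hends, Finset.card_pair (hE e he).ne]

lemma IsGraph.even_degree_of_odd_degree_mem {E : Finset (Edge N)} {W : Finset (Fin N)}
    (hE : IsGraph E) (hW : W.card ≤ 1) (hodd : ∀ v, Odd (degree E v) → v ∈ W) (v : Fin N) :
    Even (degree E v) := by
  have hcard : Even (Finset.univ.filter fun v => Odd (degree E v)).card := by
    rw [← Finset.even_sum_iff_even_card_odd, sum_degree_eq_two_mul_card hE]
    exact even_two_mul _
  have hsub : (Finset.univ.filter fun v => Odd (degree E v)) ⊆ W := fun v hv =>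
    hodd v (Finset.mem_filter.1 hv).2
  have hempty : (Finset.univ.filter fun v => Odd (degree E v)) = ∅ := by
    obtain ⟨k, hk⟩ := hcard
    have := (Finset.card_le_card hsub).trans hW
    exact Finset.card_eq_zero.1 (by omega)
  exact Nat.not_odd_iff_even.1 (Finset.filter_eq_empty_iff.1 hempty (Finset.mem_univ v))

lemma exists_mem_of_toSG_adj {E : Finset (Edge N)} {x y : Fin N} (h : (toSG E).Adj x y) :
    ∃ e ∈ E, (e.1 = x ∨ e.2 = x) ∧ (e.1 = y ∨ e.2 = y) := by
  rcases h.2 with hxy | hyx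
  · exact ⟨(x, y), hxy, Or.inl rfl, Or.inr rfl⟩
  · exact ⟨(y, x), hyx, Or.inr rfl, Or.inl rfl⟩

lemma GConnected.eq_empty_or_eq_of_disjoint_verts {S E : Finset (Edge N)} (hE : GConnected E)
    (hS : S ⊆ E) (hdisj : Disjoint (verts S) (verts (E \ S))) : S = ∅ ∨ S = E := by
  by_contra! h
  obtain ⟨e, heS⟩ := h.1
  obtain ⟨f, hfE, hfS⟩ := Finset.not_subset.1 fun hES => h.2 (hS.antisymm hES)
  have hu : e.1 ∈ verts S := mem_verts_iff.2 ⟨e, heS, Or.inl rfl⟩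
  have hw : f.1 ∈ verts (E \ S) := mem_verts_iff.2 ⟨f, Finset.mem_sdiff.2 ⟨hfE, hfS⟩, Or.inl rfl⟩
  obtain ⟨p⟩ := hE _ (verts_mono hS hu) _ (verts_mono Finset.sdiff_subset hw)
  obtain ⟨d, -, hx, hy⟩ :=
    p.exists_boundary_dart (verts S : Set (Fin N)) hu (Finset.disjoint_right.1 hdisj hw)
  obtain ⟨g, hgE, hgx, hgy⟩ := exists_mem_of_toSG_adj d.adj
  by_cases hgS : g ∈ S
  · exact hy (mem_verts_iff.2 ⟨g, hgS, hgy⟩)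
  · exact Finset.disjoint_left.1 hdisj hx (mem_verts_iff.2 ⟨g, Finset.mem_sdiff.2 ⟨hgE, hgS⟩, hgx⟩)

lemma IsCycle.eq_empty_or_eq_of_even_degree {S γ : Finset (Edge N)} (hγ : IsCycle γ)
    (hS : S ⊆ γ) (heven : ∀ v, Even (degree S v)) : S = ∅ ∨ S = γ := by
  refine hγ.2.2.1.eq_empty_or_eq_of_disjoint_verts hS (Finset.disjoint_left.2 fun v hvS hvC => ?_)
  have hsplit := degree_add_degree_sdiff hS v
  rw [hγ.2.2.2 v (verts_mono hS hvS)] at hsplit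
  rw [mem_verts] at hvS hvC
  have hone : degree S v = 1 := by omega
  exact Nat.not_even_one (hone ▸ heven v)

lemma mem_verts_inter_of_odd_degree_inter {γ τ γ' τ' : Finset (Edge N)}
    (hγ' : ∀ v ∈ verts γ', degree γ' v = 2) (hU : γ ∪ τ = γ' ∪ τ') {v : Fin N}
    (hodd : Odd (degree (γ ∩ γ') v)) : v ∈ verts γ ∩ verts τ := by
  have hvS : v ∈ verts (γ ∩ γ') := mem_verts.2 hodd.pos
  have hsplit := degree_add_degree_sdiff (Finset.inter_subset_right (s₁ := γ) (s₂ := γ')) v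
  rw [hγ' v (verts_mono Finset.inter_subset_right hvS)] at hsplit
  have hpos : 0 < degree (γ' \ (γ ∩ γ')) v := by
    obtain ⟨k, hk⟩ := hodd
    omega
  obtain ⟨f, hf, hfv⟩ := mem_verts_iff.1 (mem_verts.2 hpos)
  rw [Finset.sdiff_inter_self_right] at hf
  obtain ⟨hfγ', hfγ⟩ := Finset.mem_sdiff.1 hf
  have hfτ : f ∈ τ := by
    have := hU ▸ Finset.mem_union_left τ' hfγ'
    exact (Finset.mem_union.1 this).resolve_left hfγ
  exact Finset.mem_inter.2
    ⟨verts_mono Finset.inter_subset_left hvS, mem_verts_iff.2 ⟨f, hfτ, hfv⟩⟩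

lemma subset_of_union_eq_union {γ τ γ' τ' : Finset (Edge N)} {e : Edge N} (hγ : IsCycle γ)
    (hγ' : ∀ v ∈ verts γ', degree γ' v = 2) (he : e ∈ γ) (he' : e ∈ γ')
    (hv : (verts γ ∩ verts τ).card ≤ 1) (hU : γ ∪ τ = γ' ∪ τ') : γ ⊆ γ' := by
  have hS : IsGraph (γ ∩ γ') := fun e he => hγ.1 e (Finset.inter_subset_left he)
  have heven := hS.even_degree_of_odd_degree_mem hv
    fun _ => mem_verts_inter_of_odd_degree_inter hγ' hU
  rcases hγ.eq_empty_or_eq_of_even_degree Finset.inter_subset_left heven with h | h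
  · simpa [h] using Finset.mem_inter.2 ⟨he, he'⟩
  · exact Finset.inter_eq_left.1 h

lemma disjoint_of_card_inter_verts_le_one {γ τ : Finset (Edge N)} (hγ : IsGraph γ)
    (hv : (verts γ ∩ verts τ).card ≤ 1) : Disjoint γ τ := by
  refine Finset.disjoint_left.2 fun e heγ heτ => ?_
  have hends : ∀ v, (e.1 = v ∨ e.2 = v) → v ∈ verts γ ∩ verts τ := fun v hv =>
    Finset.mem_inter.2 ⟨mem_verts_iff.2 ⟨e, heγ, hv⟩, mem_verts_iff.2 ⟨e, heτ, hv⟩⟩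
  have := Finset.one_lt_card.2
    ⟨e.1, hends _ (Or.inl rfl), e.2, hends _ (Or.inr rfl), (hγ e heγ).ne⟩
  omega

theorem gluing_map_injective_general (N : ℕ) (i₁ i₂ : Fin N)
    (γ τ γ' τ' : Finset (Edge N))
    (hγ : IsCycle γ) (hγ' : IsCycle γ')
    (he : mkEdge i₁ i₂ ∈ γ) (he' : mkEdge i₁ i₂ ∈ γ')
    (hv : (verts γ ∩ verts τ).card ≤ 1) (hv' : (verts γ' ∩ verts τ').card ≤ 1)
    (hU : γ ∪ τ = γ' ∪ τ') :
    γ = γ' ∧ τ = τ' := by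
  have hγγ' : γ = γ' :=
    (subset_of_union_eq_union hγ hγ'.2.2.2 he he' hv hU).antisymm
      (subset_of_union_eq_union hγ' hγ.2.2.2 he' he hv' hU.symm)
  refine ⟨hγγ', ?_⟩
  calc τ = (γ ∪ τ) \ γ :=
        (Finset.union_sdiff_cancel_left (disjoint_of_card_inter_verts_le_one hγ.1 hv)).symm
    _ = (γ' ∪ τ') \ γ' := by rw [hU, hγγ']
    _ = τ' := Finset.union_sdiff_cancel_left (disjoint_of_card_inter_verts_le_one hγ'.1 hv')

/-- injectivity of the gluing map `Φ(γ,τ) = γ ∘ τ` on the set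
`S_{i₁i₂} = {(γ,τ) ∈ Γ_loop × Γ_sc : {i₁,i₂} ∈ γ, |V_γ ∩ V_τ| ≤ 1}`. -/
theorem gluing_map_injective (N : ℕ) (i₁ i₂ : Fin N) (h12 : i₁ ≠ i₂)
    (γ τ γ' τ' : Finset (Edge N))
    (hγ : IsCycle γ) (hτ : IsClosed τ) (hγ' : IsCycle γ') (hτ' : IsClosed τ')
    (he : mkEdge i₁ i₂ ∈ γ) (he' : mkEdge i₁ i₂ ∈ γ')
    (hv : (verts γ ∩ verts τ).card ≤ 1) (hv' : (verts γ' ∩ verts τ').card ≤ 1)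
    (hU : γ ∪ τ = γ' ∪ τ') :
    γ = γ' ∧ τ = τ' :=
  gluing_map_injective_general N i₁ i₂ γ τ γ' τ' hγ hγ' he he' hv hv' hU

end SK
end
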